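/- Let {C_1,…,C_M} be an (M,L)-CCC, let P be a positive divisor of M, let b^1,…,b^P be unimodular MOSs of length P, and let n_1,…,n_{P+1} be nonnegative integers with sum n. For 0 ≤ ν < M/P and 1 ≤ μ ≤ P define B_{νP+μ} = R(C_{νP+1}, …, C_{(ν+1)P}; b^μ). If t_1 = ν P + μ_1 and t_2 = ν P + μ_2 with the same block index ν and μ_1 ≠ μ_2 (1 ≤ μ_1, μ_2 ≤ P), then C(B_{t_1}, B_{t_2})(τ) = 0 for every integer τ (including τ = 0, where the value equals (Σ_{i=1}^P b^{μ_1}_i·conj(b^{μ_2}_i))·Σ_{i=1}^P C(C_{νP+i}, C_{νP+i})(0) = 0 by orthogonality of the MOSs). -/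

import Mathlib

open scoped BigOperators ComplexConjugate

noncomputable section

/-- Zero-extension of a finite complex sequence to an integer-indexed sequence. -/
def zext {L : ℕ} (a : Fin L → ℂ) (i : ℤ) : ℂ :=
  if h : 0 ≤ i ∧ i < (L : ℤ) then a ⟨i.toNat, by omega⟩ else 0

/-- Aperiodic cross-correlation function (ACCF) of two length-`L` complex sequences. -/
def accf {L : ℕ} (a b : Fin L → ℂ) (τ : ℤ) : ℂ :=
  ∑ i : Fin L, zext a ((i : ℤ) + τ) * conj (b i)

/-- Periodic cross-correlation function of two length-`N` complex sequences. -/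
def pccf {N : ℕ} (a b : Fin N → ℂ) (τ : ℤ) : ℂ :=
  accf a b τ + accf a b (τ - (N : ℤ))

/-- ACCF of two `M × L` codes (sum of row-wise ACCFs). -/
def codeACCF {M L : ℕ} (C D : Fin M → Fin L → ℂ) (τ : ℤ) : ℂ :=
  ∑ ν : Fin M, accf (C ν) (D ν) τ

/-- Periodic cross-correlation of two `M × N` codes. -/
def codePCCF {M N : ℕ} (C D : Fin M → Fin N → ℂ) (τ : ℤ) : ℂ :=
  ∑ ν : Fin M, pccf (C ν) (D ν) τ

/-- `C : Fin M → (Fin M → Fin L → ℂ)` is an `(M,L)`-CCC. -/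
def IsCCC {M L : ℕ} (C : Fin M → Fin M → Fin L → ℂ) : Prop :=
  (∀ k₁ k₂ : Fin M, ∀ τ : ℤ, (k₁ ≠ k₂ ∨ τ ≠ 0) → codeACCF (C k₁) (C k₂) τ = 0) ∧
  (∀ k : Fin M, codeACCF (C k) (C k) 0 = (M : ℂ) * (L : ℂ))

/-- Starting column of the `p`-th data block in the construction `R`:
the block `b_{p+1}·C_{p+1}` starts after the zero blocks `n_1, …, n_{p+1}` and the
previous `p` data blocks of width `L`. -/
def Roff {P : ℕ} (L : ℕ) (n : Fin (P + 1) → ℕ) (p : Fin P) : ℕ :=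
  (∑ i : Fin (P + 1), if (i : ℕ) ≤ (p : ℕ) then n i else 0) + (p : ℕ) * L

/-- The construction
`R(C_1,…,C_P; b) = [0^{n_1} ∥ b_1·C_1 ∥ 0^{n_2} ∥ b_2·C_2 ∥ … ∥ 0^{n_P} ∥ b_P·C_P ∥ 0^{n_{P+1}}]`,
an `M × (P·L + n)` matrix.  (The data blocks are pairwise disjoint, so the column `x` entry
is `b_p · (C_p)_{r,j}` if `x = Roff p + j` for (the unique) such `p, j`, and `0` otherwise.) -/
def Rmat {M L P : ℕ} (Cs : Fin P → Fin M → Fin L → ℂ) (b : Fin P → ℂ)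
    (n : Fin (P + 1) → ℕ) : Fin M → Fin (P * L + ∑ i, n i) → ℂ :=
  fun r x => ∑ p : Fin P, ∑ j : Fin L,
    if (x : ℕ) = Roff L n p + (j : ℕ) then b p * Cs p r j else 0

/-- For `t = νP + μ` (0-indexed), the index `νP + p` of the `p`-th constituent code. -/
def blockIdx {M P : ℕ} (hP : P ∣ M) (t : Fin M) (p : Fin P) : Fin M :=
  ⟨(t : ℕ) / P * P + (p : ℕ), by
    obtain ⟨k, rfl⟩ := hP
    have hPpos : 0 < P := p.pos
    have h1 : (t : ℕ) / P < k := Nat.div_lt_of_lt_mul t.isLt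
    have h4 : (p : ℕ) < P := p.isLt
    nlinarith [h1, h4]⟩

/-- Condition (13) of the paper: for `j₁ ≠ j₂`, `π_{j₁}(i₁P+μ) ≠ π_{j₂}(i₂P+μ)`;
equivalently, images of indices with the same residue mod `P` differ. -/
def Cond13 {M P : ℕ} (π : Fin P → Equiv.Perm (Fin M)) : Prop :=
  ∀ j₁ j₂ : Fin P, j₁ ≠ j₂ → ∀ s t : Fin M, (s : ℕ) % P = (t : ℕ) % P →
    π j₁ s ≠ π j₂ t

/-- Condition (14) of the paper: if `π_{j₁}(i₁P+μ₁) = π_{j₂}(i₂P+μ₂)` for `j₁ ≠ j₂`, then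
`π_{j₁}(i₁P+μ₁+α) ≠ π_{j₂}(i₂P+μ₂+α)` for every nonzero shift `α` keeping both positions
inside their blocks. -/
def Cond14 {M P : ℕ} (π : Fin P → Equiv.Perm (Fin M)) : Prop :=
  ∀ j₁ j₂ : Fin P, j₁ ≠ j₂ → ∀ s t : Fin M, π j₁ s = π j₂ t →
    ∀ α : ℤ, α ≠ 0 →
      0 ≤ ((s : ℕ) : ℤ) % (P : ℤ) + α → ((s : ℕ) : ℤ) % (P : ℤ) + α < (P : ℤ) →
      0 ≤ ((t : ℕ) : ℤ) % (P : ℤ) + α → ((t : ℕ) : ℤ) % (P : ℤ) + α < (P : ℤ) →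
      ∀ s' t' : Fin M, ((s' : ℕ) : ℤ) = ((s : ℕ) : ℤ) + α → ((t' : ℕ) : ℤ) = ((t : ℕ) : ℤ) + α →
        π j₁ s' ≠ π j₂ t'


lemma zext_coe {L : ℕ} (a : Fin L → ℂ) (x : Fin L) : zext a ((x : ℕ) : ℤ) = a x := by
  have h : (0:ℤ) ≤ ((x:ℕ):ℤ) ∧ ((x:ℕ):ℤ) < (L:ℤ) := by
    constructor
    · exact_mod_cast Nat.zero_le _
    · exact_mod_cast x.isLt
  rw [zext, dif_pos h]
  congr

lemma Roff_add_le {P : ℕ} (L : ℕ) (n : Fin (P+1) → ℕ) (p : Fin P) :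
    Roff L n p + L ≤ P * L + ∑ i, n i := by
  have h1 : (∑ i : Fin (P+1), if (i:ℕ) ≤ (p:ℕ) then n i else 0) ≤ ∑ i, n i :=
    Finset.sum_le_sum (fun i _ => by split <;> simp)
  have h2 : (p:ℕ) * L + L ≤ P * L := by
    have hp := p.isLt
    calc (p:ℕ)*L + L = ((p:ℕ)+1)*L := by ring
    _ ≤ P * L := Nat.mul_le_mul_right _ (by omega)
  unfold Roff; omega

lemma zext_Rmat {M L P : ℕ} (Cs : Fin P → Fin M → Fin L → ℂ) (b : Fin P → ℂ)
    (n : Fin (P + 1) → ℕ) (r : Fin M) (i : ℤ) :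
    zext (Rmat Cs b n r) i = ∑ p : Fin P, b p * zext (Cs p r) (i - (Roff L n p : ℤ)) := by
  by_cases h : 0 ≤ i ∧ i < ((P * L + ∑ j, n j : ℕ) : ℤ)
  · rw [zext, dif_pos h, Rmat]
    refine Finset.sum_congr rfl (fun p _ => ?_)
    by_cases h2 : 0 ≤ i - (Roff L n p : ℤ) ∧ i - (Roff L n p : ℤ) < (L : ℤ)
    · have hj : (i - (Roff L n p:ℤ)).toNat < L := by omega
      rw [Finset.sum_eq_single (⟨(i - (Roff L n p:ℤ)).toNat, hj⟩ : Fin L)]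
      · rw [if_pos (by simp; omega), zext, dif_pos h2]
      · intro j _ hne
        rw [if_neg]
        intro hx
        apply hne
        have hx' : i.toNat = Roff L n p + (j:ℕ) := hx
        ext
        simp only
        omega
      · intro hmem; exact absurd (Finset.mem_univ _) hmem
    · rw [zext, dif_neg h2, mul_zero]
      refine Finset.sum_eq_zero (fun j _ => ?_)
      rw [if_neg]
      intro hx
      have hx' : i.toNat = Roff L n p + (j:ℕ) := hx
      have hjl := j.isLt
      omega
  · rw [zext, dif_neg h]
    refine (Finset.sum_eq_zero (fun p _ => ?_)).symm
    have hb := Roff_add_le L n p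
    rw [zext, dif_neg, mul_zero]
    have hb' : ((Roff L n p : ℕ):ℤ) + (L:ℤ) ≤ ((P*L + ∑ i, n i : ℕ):ℤ) := by exact_mod_cast hb
    omega

lemma sum_zext_shift {L N : ℕ} (a c : Fin L → ℂ) (σ : ℤ) (o : ℕ) (h : o + L ≤ N) :
    ∑ x : Fin N, zext a ((x:ℤ) + σ) * conj (zext c ((x:ℤ) - (o:ℤ))) =
      accf a c (σ + o) := by
  have hg : ∀ j : Fin L, o + (j:ℕ) < N := fun j => by have := j.isLt; omega
  set g : Fin L → Fin N := fun j => ⟨o + (j:ℕ), hg j⟩ with hgdef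
  set f : Fin N → ℂ := fun x => zext a ((x:ℤ) + σ) * conj (zext c ((x:ℤ) - (o:ℤ))) with hfdef
  have hinj : ∀ j ∈ Finset.univ, ∀ j' ∈ (Finset.univ : Finset (Fin L)), g j = g j' → j = j' := by
    intro j _ j' _ hjj
    have : o + (j:ℕ) = o + (j':ℕ) := congrArg Fin.val hjj
    ext; omega
  have h1 : ∑ x : Fin N, f x = ∑ x ∈ Finset.univ.image g, f x := by
    refine (Finset.sum_subset (Finset.subset_univ _) ?_).symm
    intro x _ hx
    have hx' : ∀ j : Fin L, o + (j:ℕ) ≠ (x:ℕ) := by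
      intro j hj
      exact hx (Finset.mem_image.2 ⟨j, Finset.mem_univ _, by ext; exact hj⟩)
    have hz : ¬(0 ≤ (x:ℤ) - (o:ℤ) ∧ (x:ℤ) - (o:ℤ) < (L:ℤ)) := by
      intro hc
      have hl : ((x:ℤ) - (o:ℤ)).toNat < L := by omega
      exact hx' ⟨((x:ℤ)-(o:ℤ)).toNat, hl⟩ (by show o + ((x:ℤ)-(o:ℤ)).toNat = (x:ℕ); omega)
    have hz0 : zext c ((x:ℤ) - (o:ℤ)) = 0 := by rw [zext, dif_neg hz]
    simp only [hfdef]
    rw [hz0, map_zero, mul_zero]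
  have h2 : ∑ x ∈ Finset.univ.image g, f x = ∑ j : Fin L, f (g j) :=
    Finset.sum_image hinj
  rw [h1, h2, accf]
  refine Finset.sum_congr rfl (fun j _ => ?_)
  simp only [hfdef, hgdef]
  have e1 : ((o + (j:ℕ) : ℕ) : ℤ) + σ = (j:ℤ) + (σ + o) := by push_cast; ring
  have e2 : ((o + (j:ℕ) : ℕ) : ℤ) - (o:ℤ) = ((j:ℕ):ℤ) := by push_cast; ring
  rw [e1, e2, zext_coe]

/-- In the construction of Theorem 1, two constructed codes coming from the
same block index `ν` but different MOS indices `μ₁ ≠ μ₂` (0-indexed: `t₁/P = t₂/P` and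
`t₁%P ≠ t₂%P`) have vanishing ACCF at every shift `τ` (including `τ = 0`, by
orthogonality of the MOSs). -/
theorem snc_ccc_accf_same_block {M L P : ℕ} (hPpos : 0 < P) (hP : P ∣ M)
    (C : Fin M → Fin M → Fin L → ℂ) (hC : IsCCC C)
    (bs : Fin P → Fin P → ℂ)
    (hMOS : ∀ μ₁ μ₂ : Fin P, μ₁ ≠ μ₂ → ∑ i : Fin P, bs μ₁ i * conj (bs μ₂ i) = 0)
    (hUni : ∀ μ i : Fin P, ‖bs μ i‖ = 1)
    (n : Fin (P + 1) → ℕ)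
    (Bc : Fin M → Fin M → Fin (P * L + ∑ i, n i) → ℂ)
    (hB : ∀ t : Fin M,
      Bc t = Rmat (fun p => C (blockIdx hP t p)) (bs ⟨(t : ℕ) % P, Nat.mod_lt _ hPpos⟩) n) :
    ∀ t₁ t₂ : Fin M, (t₁ : ℕ) / P = (t₂ : ℕ) / P → (t₁ : ℕ) % P ≠ (t₂ : ℕ) % P →
      ∀ τ : ℤ, codeACCF (Bc t₁) (Bc t₂) τ = 0 := by
  obtain ⟨hC1, hC2⟩ := hC
  intro t₁ t₂ hdiv hmod τ
  set μ₁ : Fin P := ⟨(t₁:ℕ) % P, Nat.mod_lt _ hPpos⟩ with hμ₁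
  set μ₂ : Fin P := ⟨(t₂:ℕ) % P, Nat.mod_lt _ hPpos⟩ with hμ₂
  have hkey : ∀ r : Fin M, accf (Bc t₁ r) (Bc t₂ r) τ =
      ∑ p₁ : Fin P, ∑ p₂ : Fin P, bs μ₁ p₁ * conj (bs μ₂ p₂) *
        accf (C (blockIdx hP t₁ p₁) r) (C (blockIdx hP t₂ p₂) r)
          ((τ - (Roff L n p₁ : ℤ)) + (Roff L n p₂ : ℤ)) := by
    intro r
    rw [accf]
    have step : ∀ x : Fin (P * L + ∑ i, n i),
        zext (Bc t₁ r) ((x:ℤ) + τ) * conj (Bc t₂ r x) =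
        ∑ p₁ : Fin P, ∑ p₂ : Fin P,
          (bs μ₁ p₁ * zext (C (blockIdx hP t₁ p₁) r) (((x:ℤ) + τ) - (Roff L n p₁ : ℤ))) *
          conj (bs μ₂ p₂ * zext (C (blockIdx hP t₂ p₂) r) ((x:ℤ) - (Roff L n p₂ : ℤ))) := by
      intro x
      have e1 : zext (Bc t₁ r) ((x:ℤ) + τ) =
          ∑ p₁ : Fin P, bs μ₁ p₁ * zext (C (blockIdx hP t₁ p₁) r)
            (((x:ℤ) + τ) - (Roff L n p₁ : ℤ)) := by
        rw [hB t₁]; exact zext_Rmat _ _ _ _ _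
      have e2 : Bc t₂ r x =
          ∑ p₂ : Fin P, bs μ₂ p₂ * zext (C (blockIdx hP t₂ p₂) r)
            ((x:ℤ) - (Roff L n p₂ : ℤ)) := by
        rw [hB t₂, ← zext_coe (Rmat _ _ n r) x]
        exact zext_Rmat _ _ _ _ _
      rw [e1, e2, map_sum, Finset.sum_mul_sum]
    rw [Finset.sum_congr rfl (fun x _ => step x), Finset.sum_comm]
    refine Finset.sum_congr rfl (fun p₁ _ => ?_)
    rw [Finset.sum_comm]
    refine Finset.sum_congr rfl (fun p₂ _ => ?_)
    have : ∀ x : Fin (P * L + ∑ i, n i),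
        (bs μ₁ p₁ * zext (C (blockIdx hP t₁ p₁) r) (((x:ℤ) + τ) - (Roff L n p₁ : ℤ))) *
          conj (bs μ₂ p₂ * zext (C (blockIdx hP t₂ p₂) r) ((x:ℤ) - (Roff L n p₂ : ℤ))) =
        bs μ₁ p₁ * conj (bs μ₂ p₂) *
          (zext (C (blockIdx hP t₁ p₁) r) ((x:ℤ) + (τ - (Roff L n p₁ : ℤ))) *
            conj (zext (C (blockIdx hP t₂ p₂) r) ((x:ℤ) - (Roff L n p₂ : ℤ)))) := by
      intro x
      have e3 : ((x:ℤ) + τ) - (Roff L n p₁ : ℤ) = (x:ℤ) + (τ - (Roff L n p₁ : ℤ)) := by ring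
      rw [e3, map_mul]; ring
    rw [Finset.sum_congr rfl (fun x _ => this x), ← Finset.mul_sum,
      sum_zext_shift _ _ _ _ (Roff_add_le L n p₂)]
  have hblk : ∀ p : Fin P, blockIdx hP t₂ p = blockIdx hP t₁ p := by
    intro p; ext; simp [blockIdx, hdiv]
  have hblkne : ∀ p₁ p₂ : Fin P, p₁ ≠ p₂ → blockIdx hP t₁ p₁ ≠ blockIdx hP t₂ p₂ := by
    intro p₁ p₂ hne h
    apply hne
    have := congrArg Fin.val h
    simp only [blockIdx, hdiv] at this
    ext; omega
  rw [codeACCF, Finset.sum_congr rfl (fun r _ => hkey r), Finset.sum_comm]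
  have hdiag : ∀ p₁ : Fin P,
      ∑ r : Fin M, ∑ p₂ : Fin P, bs μ₁ p₁ * conj (bs μ₂ p₂) *
        accf (C (blockIdx hP t₁ p₁) r) (C (blockIdx hP t₂ p₂) r)
          ((τ - (Roff L n p₁ : ℤ)) + (Roff L n p₂ : ℤ)) =
      bs μ₁ p₁ * conj (bs μ₂ p₁) *
        codeACCF (C (blockIdx hP t₁ p₁)) (C (blockIdx hP t₁ p₁)) τ := by
    intro p₁
    rw [Finset.sum_comm]
    rw [Finset.sum_eq_single p₁]
    · have e : (τ - (Roff L n p₁ : ℤ)) + (Roff L n p₁ : ℤ) = τ := by ring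
      rw [hblk p₁, e, ← Finset.mul_sum, codeACCF]
    · intro p₂ _ hne
      have h0 : codeACCF (C (blockIdx hP t₁ p₁)) (C (blockIdx hP t₂ p₂))
          ((τ - (Roff L n p₁ : ℤ)) + (Roff L n p₂ : ℤ)) = 0 :=
        hC1 _ _ _ (Or.inl (hblkne p₁ p₂ (Ne.symm hne)))
      rw [← Finset.mul_sum, ← codeACCF, h0, mul_zero]
    · intro hmem; exact absurd (Finset.mem_univ _) hmem
  rw [Finset.sum_congr rfl (fun p₁ _ => hdiag p₁)]
  by_cases hτ : τ = 0
  · subst hτ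
    have hμne : μ₁ ≠ μ₂ := by
      intro h; exact hmod (congrArg Fin.val h)
    calc ∑ p₁ : Fin P, bs μ₁ p₁ * conj (bs μ₂ p₁) *
          codeACCF (C (blockIdx hP t₁ p₁)) (C (blockIdx hP t₁ p₁)) 0
        = ∑ p₁ : Fin P, bs μ₁ p₁ * conj (bs μ₂ p₁) * ((M:ℂ) * (L:ℂ)) := by
          refine Finset.sum_congr rfl (fun p₁ _ => ?_)
          rw [hC2]
      _ = (∑ p₁ : Fin P, bs μ₁ p₁ * conj (bs μ₂ p₁)) * ((M:ℂ) * (L:ℂ)) := by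
          rw [Finset.sum_mul]
      _ = 0 := by rw [hMOS μ₁ μ₂ hμne, zero_mul]
  · refine Finset.sum_eq_zero (fun p₁ _ => ?_)
    rw [hC1 _ _ _ (Or.inr hτ), mul_zero]

end
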